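/- arXiv:1603.00858 — 5 statements merged into one kernel-verified Lean document; each statement's English description precedes it below -/
import Mathlib

section
/- Let C be a finite set and P a strict linear order on C. Then there exists a utility function u : C → ℝ such that for all subsets C₁, C₂ ⊆ C with C₁ ≠ C₂, we have Σ_{c∈C₁} u(c) > Σ_{c∈C₂} u(c) if and only if the P-most-preferred element of the symmetric difference C₁ Δ C₂ belongs to C₁. That is, lexicographic preferences over bundles can be represented by additive utilities. -/
open Finset

private lemma sum_pow_two_lt (k : ℕ) : ∑ i ∈ Finset.range k, (2:ℝ)^i < 2^k := by
  induction k with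
  | zero => simp
  | succ n ih =>
    rw [Finset.sum_range_succ, pow_succ]
    linarith

/-- lexicographic preferences over bundles can be represented by
additive utilities.  For a finite set `C` with a strict linear order (greater =
more preferred), there is a utility function `u : C → ℝ` such that for any two
distinct subsets `S₁ ≠ S₂`, the sum of utilities over `S₁` exceeds that over `S₂`
if and only if the most preferred (i.e. greatest) element of the symmetric
difference `S₁ Δ S₂` belongs to `S₁`. -/
theorem lex_represented_by_additive_utilities {C : Type*} [Fintype C] [LinearOrder C] :
    ∃ u : C → ℝ, ∀ S₁ S₂ : Finset C, S₁ ≠ S₂ →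
      ((∑ c ∈ S₂, u c < ∑ c ∈ S₁, u c) ↔
        ∃ c ∈ S₁ \ S₂, ∀ d ∈ (S₁ \ S₂) ∪ (S₂ \ S₁), d ≤ c) := by
  classical
  set r : C → ℕ := fun c => (Finset.univ.filter (· < c)).card with hr
  have hrmono : StrictMono r := by
    intro a b hab
    apply Finset.card_lt_card
    constructor
    · intro x hx
      simp only [Finset.mem_filter, Finset.mem_univ, true_and] at hx ⊢
      exact hx.trans hab
    · intro hsub
      have ha : a ∈ Finset.univ.filter (· < b) := by simp [hab]
      have := hsub ha
      simp at this
  set u : C → ℝ := fun c => (2:ℝ)^(r c) with hu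
  have hupos : ∀ c, 0 < u c := fun c => by positivity
  -- key lemma: if A, B are disjoint, m ∈ A, and everything in A ∪ B is ≤ m,
  -- then ∑ B < ∑ A.
  have hkey : ∀ (A B : Finset C) (m : C), Disjoint A B → m ∈ A →
      (∀ d ∈ A ∪ B, d ≤ m) → ∑ c ∈ B, u c < ∑ c ∈ A, u c := by
    intro A B m hdisj hmA hle
    have hB : ∑ c ∈ B, u c < (2:ℝ)^(r m) := by
      have hinj : Set.InjOn r B := fun x _ y _ h => hrmono.injective h
      have h1 : ∑ c ∈ B, u c = ∑ i ∈ B.image r, (2:ℝ)^i := by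
        rw [Finset.sum_image (fun x hx y hy h => hinj hx hy h)]
      have hsub : B.image r ⊆ Finset.range (r m) := by
        intro i hi
        rw [Finset.mem_image] at hi
        obtain ⟨d, hd, rfl⟩ := hi
        have hdm : d ≤ m := hle d (Finset.mem_union_right _ hd)
        have hdne : d ≠ m := by
          intro h; subst h
          exact (Finset.disjoint_left.mp hdisj hmA) hd
        exact Finset.mem_range.mpr (hrmono (lt_of_le_of_ne hdm hdne))
      calc ∑ c ∈ B, u c = ∑ i ∈ B.image r, (2:ℝ)^i := h1
        _ ≤ ∑ i ∈ Finset.range (r m), (2:ℝ)^i :=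
            Finset.sum_le_sum_of_subset_of_nonneg hsub (fun i _ _ => by positivity)
        _ < 2^(r m) := sum_pow_two_lt _
    have hA : (2:ℝ)^(r m) ≤ ∑ c ∈ A, u c :=
      Finset.single_le_sum (fun c _ => (hupos c).le) hmA
    linarith
  refine ⟨u, ?_⟩
  intro S₁ S₂ hne
  set D₁ := S₁ \ S₂ with hD₁
  set D₂ := S₂ \ S₁ with hD₂
  have hdisj : Disjoint D₁ D₂ := disjoint_sdiff_sdiff
  have hDne : (D₁ ∪ D₂).Nonempty := by
    rw [Finset.nonempty_iff_ne_empty]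
    intro h
    rw [Finset.union_eq_empty] at h
    exact hne (Finset.Subset.antisymm
      (Finset.sdiff_eq_empty_iff_subset.mp h.1)
      (Finset.sdiff_eq_empty_iff_subset.mp h.2))
  have hsum1 : ∑ c ∈ S₁ ∩ S₂, u c + ∑ c ∈ D₁, u c = ∑ c ∈ S₁, u c :=
    Finset.sum_inter_add_sum_sdiff S₁ S₂ u
  have hsum2 : ∑ c ∈ S₂ ∩ S₁, u c + ∑ c ∈ D₂, u c = ∑ c ∈ S₂, u c :=
    Finset.sum_inter_add_sum_sdiff S₂ S₁ u
  have hcomm : S₂ ∩ S₁ = S₁ ∩ S₂ := Finset.inter_comm _ _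
  have hiff : (∑ c ∈ S₂, u c < ∑ c ∈ S₁, u c) ↔ (∑ c ∈ D₂, u c < ∑ c ∈ D₁, u c) := by
    rw [hcomm] at hsum2
    constructor <;> intro h <;> linarith
  rw [hiff]
  set m := (D₁ ∪ D₂).max' hDne with hm
  have hmmem : m ∈ D₁ ∪ D₂ := Finset.max'_mem _ _
  have hmle : ∀ d ∈ D₁ ∪ D₂, d ≤ m := fun d hd => Finset.le_max' _ d hd
  constructor
  · intro hlt
    rcases Finset.mem_union.mp hmmem with hm1 | hm2
    · exact ⟨m, hm1, hmle⟩
    · have := hkey D₂ D₁ m hdisj.symm hm2 (by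
        intro d hd
        exact hmle d (by rwa [Finset.union_comm] at hd))
      linarith
  · rintro ⟨c, hc, hcle⟩
    exact hkey D₁ D₂ c hdisj hc hcle
end

section
/- Let w_1,…,w_n, p_1,…,p_n, W, P be positive integers. Consider the CAPR instance with a single applicant a₁ of capacity W and course set C ∪ D, where C = {c_1,…,c_n} and D = ⋃_{i=1}^n {d_i^1,…,d_i^{w_i−1}}, every course has capacity 1 and is acceptable to a₁, the prerequisites of a₁ are c_i →_{a₁} d_i^j for all 1 ≤ i ≤ n and 1 ≤ j ≤ w_i−1, and a₁ has additive utilities u(c_i) = p_i + δ_i and u(d_i^j) = ε_i^j, where the δ_i and ε_i^j are arbitrary positive reals whose total sum is less than 1. Then a₁ has a feasible bundle of total utility at least P if and only if there exists a set K ⊆ {1,…,n} with Σ_{i∈K} w_i ≤ W and Σ_{i∈K} p_i ≥ P (i.e., if and only if the knapsack instance (w, p, W, P) is a yes-instance). -/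
open Finset

/-- the knapsack reduction for CAPR with additive preferences.
The instance has a single applicant `a₁` of capacity `W`; the courses are
`c_i` (`Sum.inl i`) and their prerequisites `d_i^j` (`Sum.inr ⟨i, j⟩`,
`1 ≤ j ≤ w_i - 1`), all acceptable to `a₁` and of capacity 1; the prerequisites
are `c_i →_{a₁} d_i^j`; the utilities are `u (c_i) = p_i + δ_i` and
`u (d_i^j) = ε_i^j` where all `δ_i, ε_i^j` are positive reals of total sum `< 1`.
Then `a₁` has a feasible bundle of total utility at least `P` iff the knapsack
instance `(w, p, W, P)` is a yes-instance. -/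
theorem capr_knapsack_reduction {n : ℕ} (w p : Fin n → ℕ) (W P : ℕ)
    (hw : ∀ i, 0 < w i) (hp : ∀ i, 0 < p i) (hW : 0 < W) (hP : 0 < P)
    (δ : Fin n → ℝ) (ε : (i : Fin n) → Fin (w i - 1) → ℝ)
    (hδ : ∀ i, 0 < δ i) (hε : ∀ i j, 0 < ε i j)
    (hsum : (∑ i, δ i) + ∑ i, ∑ j, ε i j < 1) :
    (∃ S : Finset ((Fin n) ⊕ (Σ i : Fin n, Fin (w i - 1))),
        -- `S` is a feasible bundle for `a₁` ...
        S.card ≤ W ∧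
        (∀ (i : Fin n) (j : Fin (w i - 1)), Sum.inl i ∈ S → Sum.inr ⟨i, j⟩ ∈ S) ∧
        -- ... of total utility at least `P`
        (P : ℝ) ≤ ∑ c ∈ S,
          Sum.elim (fun i => (p i : ℝ) + δ i) (fun d => ε d.1 d.2) c) ↔
      (∃ K : Finset (Fin n), ∑ i ∈ K, w i ≤ W ∧ P ≤ ∑ i ∈ K, p i) := by
  constructor
  · rintro ⟨S, hcard, hclosed, hval⟩
    set K : Finset (Fin n) := univ.filter (fun i => Sum.inl i ∈ S) with hKdef
    have hmemK : ∀ i : Fin n, i ∈ K ↔ Sum.inl i ∈ S := by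
      intro i; simp [hKdef]
    set A : Finset ((Fin n) ⊕ (Σ i : Fin n, Fin (w i - 1))) := K.image Sum.inl with hA
    set B : Finset ((Fin n) ⊕ (Σ i : Fin n, Fin (w i - 1))) :=
      (K.sigma fun i => (univ : Finset (Fin (w i - 1)))).image Sum.inr with hB
    have hsub : A ∪ B ⊆ S := by
      intro c hc
      rcases mem_union.1 hc with h | h
      · obtain ⟨i, hi, rfl⟩ := mem_image.1 h
        exact (hmemK i).1 hi
      · obtain ⟨⟨i, j⟩, hij, rfl⟩ := mem_image.1 h
        exact hclosed i j ((hmemK i).1 (mem_sigma.1 hij).1)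
    have hdisj : Disjoint A B := by
      simp only [Finset.disjoint_left, hA, hB, mem_image]
      rintro c ⟨i, hi, rfl⟩ ⟨x, hx, h⟩
      exact absurd h (by simp)
    have hcardAB : (A ∪ B).card = ∑ i ∈ K, w i := by
      rw [card_union_of_disjoint hdisj, hA, hB,
        card_image_of_injective _ Sum.inl_injective,
        card_image_of_injective _ Sum.inr_injective, card_sigma]
      simp only [card_univ, Fintype.card_fin]
      rw [card_eq_sum_ones, ← sum_add_distrib]
      exact sum_congr rfl fun i _ => by have := hw i; omega
    refine ⟨K, ?_, ?_⟩
    · calc ∑ i ∈ K, w i = (A ∪ B).card := hcardAB.symm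
        _ ≤ S.card := card_le_card hsub
        _ ≤ W := hcard
    · -- utility bound
      set u : (Fin n) ⊕ (Σ i : Fin n, Fin (w i - 1)) → ℝ :=
        Sum.elim (fun i => (p i : ℝ) + δ i) (fun d => ε d.1 d.2) with hu
      set base : (Fin n) ⊕ (Σ i : Fin n, Fin (w i - 1)) → ℝ :=
        Sum.elim (fun i => (p i : ℝ)) (fun _ => 0) with hbase
      set extra : (Fin n) ⊕ (Σ i : Fin n, Fin (w i - 1)) → ℝ :=
        Sum.elim (fun i => δ i) (fun d => ε d.1 d.2) with hextra
      have hsplit : ∀ c, u c = base c + extra c := by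
        rintro (i | d) <;> simp [hu, hbase, hextra]
      have hAS : A ⊆ S := fun c hc => hsub (mem_union_left _ hc)
      have hbase_sum : ∑ c ∈ S, base c = ∑ i ∈ K, (p i : ℝ) := by
        have h0 : ∀ c ∈ S, c ∉ A → base c = 0 := by
          rintro (i | d) hc hnc
          · exact absurd (mem_image_of_mem Sum.inl ((hmemK i).2 hc)) hnc
          · simp [hbase]
        rw [← sum_subset hAS h0, hA,
          sum_image (fun x _ y _ h => Sum.inl_injective h)]
        simp [hbase]
      have hextra_le : ∑ c ∈ S, extra c ≤ (∑ i, δ i) + ∑ i, ∑ j, ε i j := by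
        have h1 : ∑ c ∈ S, extra c ≤ ∑ c, extra c :=
          sum_le_sum_of_subset_of_nonneg (subset_univ S)
            (fun c _ _ => by rcases c with i | d
                             · exact le_of_lt (hδ i)
                             · exact le_of_lt (hε d.1 d.2))
        refine h1.trans_eq ?_
        rw [Fintype.sum_sum_type]
        simp [hextra, Finset.sum_sigma']
      have hKp : (P : ℝ) < (∑ i ∈ K, (p i : ℝ)) + 1 := by
        have := hval
        calc (P : ℝ) ≤ ∑ c ∈ S, u c := hval
          _ = ∑ c ∈ S, base c + ∑ c ∈ S, extra c := by
              rw [← sum_add_distrib]; exact sum_congr rfl fun c _ => hsplit c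
          _ < ∑ i ∈ K, (p i : ℝ) + 1 := by
              rw [hbase_sum]
              have := hextra_le.trans_lt hsum
              linarith
      have h5 : (P : ℝ) < ((∑ i ∈ K, p i : ℕ) : ℝ) + 1 := by push_cast; push_cast at hKp; linarith
      have h6 : P < (∑ i ∈ K, p i) + 1 := by exact_mod_cast h5
      omega
  · rintro ⟨K, hWle, hPle⟩
    set A : Finset ((Fin n) ⊕ (Σ i : Fin n, Fin (w i - 1))) := K.image Sum.inl with hA
    set B : Finset ((Fin n) ⊕ (Σ i : Fin n, Fin (w i - 1))) :=
      (K.sigma fun i => (univ : Finset (Fin (w i - 1)))).image Sum.inr with hB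
    have hdisj : Disjoint A B := by
      simp only [Finset.disjoint_left, hA, hB, mem_image]
      rintro c ⟨i, hi, rfl⟩ ⟨x, hx, h⟩
      exact absurd h (by simp)
    refine ⟨A ∪ B, ?_, ?_, ?_⟩
    · rw [card_union_of_disjoint hdisj, hA, hB,
        card_image_of_injective _ Sum.inl_injective,
        card_image_of_injective _ Sum.inr_injective, card_sigma]
      simp only [card_univ, Fintype.card_fin]
      calc K.card + ∑ i ∈ K, (w i - 1) = ∑ i ∈ K, w i := by
            rw [card_eq_sum_ones, ← sum_add_distrib]
            exact sum_congr rfl fun i _ => by have := hw i; omega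
        _ ≤ W := hWle
    · intro i j hi
      rcases mem_union.1 hi with h | h
      · obtain ⟨i', hi', h⟩ := mem_image.1 h
        obtain rfl : i' = i := Sum.inl_injective h
        exact mem_union_right _ (mem_image_of_mem _ (mem_sigma.2 ⟨hi', mem_univ _⟩))
      · obtain ⟨x, hx, h⟩ := mem_image.1 h
        exact absurd h (by simp)
    · rw [sum_union hdisj]
      have h1 : ∑ c ∈ A, Sum.elim (fun i => (p i : ℝ) + δ i) (fun d => ε d.1 d.2) c
          = ∑ i ∈ K, ((p i : ℝ) + δ i) := by
        rw [hA, sum_image (fun x _ y _ h => Sum.inl_injective h)]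
        simp
      have h2 : 0 ≤ ∑ c ∈ B, Sum.elim (fun i => (p i : ℝ) + δ i) (fun d => ε d.1 d.2) c := by
        refine sum_nonneg fun c hc => ?_
        rcases c with i | d
        · exact add_nonneg (Nat.cast_nonneg _) (le_of_lt (hδ i))
        · exact le_of_lt (hε d.1 d.2)
      have h3 : (P : ℝ) ≤ ∑ i ∈ K, (p i : ℝ) := by exact_mod_cast hPle
      have h4 : ∑ i ∈ K, (p i : ℝ) ≤ ∑ i ∈ K, ((p i : ℝ) + δ i) :=
        sum_le_sum fun i _ => le_add_of_nonneg_right (le_of_lt (hδ i))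
      linarith [h1, h2]
end

section
/- Let X = {x_1,…,x_{3n}} be a set and T = {T_1,…,T_m} a family of 3-element subsets of X with m ≥ n; write T_i = {x_{i₁}, x_{i₂}, x_{i₃}}. Construct the CAPR instance J with lexicographic preferences as follows: applicants a_1,…,a_{m+1} with capacities q(a_i) = 4 for 1 ≤ i ≤ m and q(a_{m+1}) = 2n + m; courses T ∪ X ∪ Y ∪ W, where Y = {y_1,…,y_m} and W = {w_1,…,w_{m−n}}, each course of capacity 1; preference lists P(a_i): T_i, all courses of W in some fixed order, y_i, x_{i₁}, x_{i₂}, x_{i₃} (for 1 ≤ i ≤ m), and P(a_{m+1}): y_1, all courses of X in some fixed order, all courses of W in some fixed order, y_2, …, y_m; prerequisites: for 1 ≤ i ≤ m, the strict partial order →_{a_i} is the transitive closure of T_i →_{a_i} x_{i₁} →_{a_i} x_{i₂} →_{a_i} x_{i₃}, and →_{a_{m+1}} is the transitive closure of y_1 →_{a_{m+1}} y_2 →_{a_{m+1}} … →_{a_{m+1}} y_m. Let M = {(a_i, y_i) : 1 ≤ i ≤ m} ∪ {(a_{m+1}, x_j) : 1 ≤ j ≤ 3n} ∪ {(a_{m+1},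 w_k) : 1 ≤ k ≤ m−n}. Then there exists a subfamily T' ⊆ T of pairwise disjoint triples whose union is X (an exact 3-cover) if and only if some matching M' of J dominates M. -/
open Finset

/-- The bundle of courses assigned to applicant `a` by the assignment `M`. -/
def bundle {A C : Type*} [DecidableEq A] [DecidableEq C]
    (M : Finset (A × C)) (a : A) : Finset C :=
  (M.filter fun p => p.1 = a).image Prod.snd

/-- The number of applicants assigned to course `c` by the assignment `M`. -/
def slots {A C : Type*} [DecidableEq C] (M : Finset (A × C)) (c : C) : ℕ :=
  (M.filter fun p => p.2 = c).card

/-- Lexicographic comparison of bundles w.r.t. a preference list (earlier = better). -/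
def lexPrefers {C : Type*} [DecidableEq C] (l : List C) (S₁ S₂ : Finset C) : Prop :=
  ∃ c ∈ S₁ \ S₂, ∀ d ∈ (S₁ \ S₂) ∪ (S₂ \ S₁), l.idxOf c ≤ l.idxOf d

def IsFeasible {A C : Type*} (pref : A → List C) (qA : A → ℕ)
    (prereq : A → C → C → Prop) (a : A) (S : Finset C) : Prop :=
  (∀ c ∈ S, c ∈ pref a) ∧ S.card ≤ qA a ∧
    ∀ c ∈ S, ∀ c', prereq a c c' → c' ∈ S

def IsMatching {A C : Type*} [DecidableEq A] [DecidableEq C]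
    (pref : A → List C) (qA : A → ℕ) (qC : C → ℕ)
    (prereq : A → C → C → Prop) (M : Finset (A × C)) : Prop :=
  (∀ a, IsFeasible pref qA prereq a (bundle M a)) ∧ ∀ c, slots M c ≤ qC c

def Dominates {A C : Type*} [DecidableEq A] [DecidableEq C]
    (pref : A → List C) (M' M : Finset (A × C)) : Prop :=
  (∃ a, lexPrefers (pref a) (bundle M' a) (bundle M a)) ∧
    ∀ a, ¬ lexPrefers (pref a) (bundle M a) (bundle M' a)

/-- The courses of the instance `J`: the `T`-courses, the `X`-courses,
the `Y`-courses and the `W`-courses. -/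
abbrev Course (m n : ℕ) := (Fin m) ⊕ ((Fin (3 * n)) ⊕ ((Fin m) ⊕ (Fin (m - n))))

def cT {m n : ℕ} (i : Fin m) : Course m n := Sum.inl i
def cX {m n : ℕ} (x : Fin (3 * n)) : Course m n := Sum.inr (Sum.inl x)
def cY {m n : ℕ} (i : Fin m) : Course m n := Sum.inr (Sum.inr (Sum.inl i))
def cW {m n : ℕ} (k : Fin (m - n)) : Course m n := Sum.inr (Sum.inr (Sum.inr k))

/-- Preference lists of the applicants `a_1, …, a_{m+1}` (an applicant is an element
of `Fin (m+1)`; the ones with value `< m` are `a_1, …, a_m` and the last one is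
`a_{m+1}`).  `t i` gives the three elements `x_{i₁}, x_{i₂}, x_{i₃}` of the triple
`T_i`; `lW`, `lX`, `lW'` are the fixed orderings of `W` and `X` used in the lists. -/
def prefJ {m n : ℕ} (hm : 0 < m) (t : Fin m → Fin 3 → Fin (3 * n))
    (lW : List (Fin (m - n))) (lX : List (Fin (3 * n))) (lW' : List (Fin (m - n))) :
    Fin (m + 1) → List (Course m n) := fun a =>
  if h : (a : ℕ) < m then
    let i : Fin m := ⟨a, h⟩
    cT i :: (lW.map cW ++ [cY i, cX (t i 0), cX (t i 1), cX (t i 2)])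
  else
    cY (⟨0, hm⟩ : Fin m) ::
      (lX.map cX ++ lW'.map cW ++ ((List.finRange m).drop 1).map cY)

/-- The prerequisites: for `a_i` (`i ≤ m`) the transitive closure of the chain
`T_i → x_{i₁} → x_{i₂} → x_{i₃}`; for `a_{m+1}` the transitive closure of the
chain `y_1 → y_2 → … → y_m`. -/
def prereqJ {m n : ℕ} (t : Fin m → Fin 3 → Fin (3 * n)) :
    Fin (m + 1) → Course m n → Course m n → Prop := fun a c c' =>
  if h : (a : ℕ) < m then
    let i : Fin m := ⟨a, h⟩
    (c = cT i ∧ (c' = cX (t i 0) ∨ c' = cX (t i 1) ∨ c' = cX (t i 2))) ∨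
    (c = cX (t i 0) ∧ (c' = cX (t i 1) ∨ c' = cX (t i 2))) ∨
    (c = cX (t i 1) ∧ c' = cX (t i 2))
  else
    ∃ j k : Fin m, j < k ∧ c = cY j ∧ c' = cY k

/-- The matching `M` of the statement: `a_i` gets `y_i` for `1 ≤ i ≤ m`, and
`a_{m+1}` gets all of `X` and all of `W`. -/
def M₀ {m n : ℕ} : Finset (Fin (m + 1) × Course m n) :=
  ((Finset.univ : Finset (Fin m)).image fun i => (Fin.castSucc i, cY i)) ∪
    ((Finset.univ : Finset (Fin (3 * n))).image fun x => (Fin.last m, cX x)) ∪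
    ((Finset.univ : Finset (Fin (m - n))).image fun k => (Fin.last m, cW k))

/-!
Given an exact cover `T'`, let `a_i` take `T_i` together with its three elements when `i ∈ T'`
and a private course of `W` otherwise (there are exactly `m - n` such `i`), and let `a_{m+1}`
take all of `Y`: every applicant gets a course ranked above everything it loses.

Conversely, let `M'` dominate `M`. The bundle `X ∪ W` of `a_{m+1}` fills its capacity and ranks
above `y_2, …, y_m`, so `a_{m+1}` either keeps it, and then nobody else can improve, or takes
`y_1` and with it all of `Y`. In the latter case every `a_i` loses `y_i` and must take `T_i`
(hence its three elements) or a course of `W`. The `m - n` courses of `W` leave at least `n`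
applicants of the first kind, and their triples are disjoint, so at most `n` fit into `X`:
they form an exact cover.
-/

section LexPreference

variable {C : Type*} [DecidableEq C] {l₁ l₂ : List C} {S₁ S₂ : Finset C}

theorem lexPrefers_or_lexPrefers_of_ne (l : List C) (h : S₁ ≠ S₂) :
    lexPrefers l S₁ S₂ ∨ lexPrefers l S₂ S₁ := by
  have hne : (S₁ \ S₂ ∪ S₂ \ S₁).Nonempty := by
    rw [Finset.nonempty_iff_ne_empty, Ne, Finset.union_eq_empty,
      Finset.sdiff_eq_empty_iff_subset, Finset.sdiff_eq_empty_iff_subset]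
    exact fun h' => h (h'.1.antisymm h'.2)
  obtain ⟨c, hc, hmin⟩ := Finset.exists_min_image _ l.idxOf hne
  rcases Finset.mem_union.mp hc with hc | hc
  · exact .inl ⟨c, hc, hmin⟩
  · exact .inr ⟨c, hc, by rwa [Finset.union_comm]⟩

theorem not_lexPrefers_of_subset (l : List C) (h : S₁ ⊆ S₂) : ¬ lexPrefers l S₁ S₂ := by
  rintro ⟨c, hc, -⟩
  simp [Finset.sdiff_eq_empty_iff_subset.mpr h] at hc

theorem exists_mem_sdiff_mem_of_lexPrefers_append (h : lexPrefers (l₁ ++ l₂) S₁ S₂)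
    {d : C} (hd : d ∈ S₂ \ S₁) (hdl : d ∈ l₁) : ∃ c ∈ S₁ \ S₂, c ∈ l₁ := by
  obtain ⟨c, hc, hmin⟩ := h
  refine ⟨c, hc, by_contra fun hcl => ?_⟩
  have hle := hmin d (Finset.mem_union_right _ hd)
  rw [List.idxOf_append_of_notMem hcl, List.idxOf_append_of_mem hdl] at hle
  exact absurd (List.idxOf_lt_length_iff.mpr hdl) (by omega)

theorem lexPrefers_append_and_not {c : C} (hc : c ∈ S₁ \ S₂) (hcl : c ∈ l₁)
    (h : ∀ d ∈ S₂ \ S₁, d ∉ l₁) :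
    lexPrefers (l₁ ++ l₂) S₁ S₂ ∧ ¬ lexPrefers (l₁ ++ l₂) S₂ S₁ := by
  have hnot : ¬ lexPrefers (l₁ ++ l₂) S₂ S₁ := fun h' => by
    obtain ⟨d, hd, hdl⟩ := exists_mem_sdiff_mem_of_lexPrefers_append h' hc hcl
    exact h d hd hdl
  refine ⟨(lexPrefers_or_lexPrefers_of_ne _ fun he => ?_).resolve_right hnot, hnot⟩
  simp [he] at hc

end LexPreference

section Matching

variable {A C : Type*} [DecidableEq C]

def ofBundles [Fintype A] [Fintype C] (B : A → Finset C) : Finset (A × C) :=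
  Finset.univ.filter fun p => p.2 ∈ B p.1

theorem slots_ofBundles_le_one [Fintype A] [Fintype C] {B : A → Finset C}
    (hB : Pairwise fun a b => Disjoint (B a) (B b)) (c : C) :
    slots (ofBundles B) c ≤ 1 := by
  refine Finset.card_le_one.mpr fun p hp q hq => ?_
  simp only [ofBundles, Finset.mem_filter, Finset.mem_univ, true_and] at hp hq
  obtain ⟨hp, rfl⟩ := hp
  refine Prod.ext (by_contra fun hne => ?_) hq.2.symm
  exact Finset.disjoint_left.mp (hB hne) hp (hq.2 ▸ hq.1)

variable [DecidableEq A]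

theorem mem_bundle {M : Finset (A × C)} {a : A} {c : C} : c ∈ bundle M a ↔ (a, c) ∈ M := by
  simp [bundle]

@[simp] theorem bundle_ofBundles [Fintype A] [Fintype C] (B : A → Finset C) (a : A) :
    bundle (ofBundles B) a = B a := by
  ext c; simp [mem_bundle, ofBundles]

theorem disjoint_bundle {M : Finset (A × C)} (hM : ∀ c, slots M c ≤ 1) {a b : A}
    (hab : a ≠ b) : Disjoint (bundle M a) (bundle M b) := by
  refine Finset.disjoint_left.mpr fun c ha hb => hab ?_
  have := Finset.card_le_one.mp (hM c) (a, c) (by simpa [mem_bundle] using ha) (b, c)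
    (by simpa [mem_bundle] using hb)
  exact congrArg Prod.fst this

theorem Dominates.eq_or_lexPrefers {pref : A → List C} {M' M : Finset (A × C)}
    (h : Dominates pref M' M) (a : A) :
    bundle M' a = bundle M a ∨ lexPrefers (pref a) (bundle M' a) (bundle M a) :=
  or_iff_not_imp_left.mpr fun hne =>
    (lexPrefers_or_lexPrefers_of_ne _ hne).resolve_right (h.2 a)

theorem dominates_of_forall_lexPrefers {pref : A → List C} {M' M : Finset (A × C)} (a₀ : A)
    (h : ∀ a, lexPrefers (pref a) (bundle M' a) (bundle M a) ∧
      ¬ lexPrefers (pref a) (bundle M a) (bundle M' a)) :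
    Dominates pref M' M :=
  ⟨⟨a₀, (h a₀).1⟩, fun a => (h a).2⟩

end Matching

theorem card_biUnion_of_card_eq {ι α : Type*} [DecidableEq α] {s : ι → Finset α}
    {T : Finset ι} (hs : (T : Set ι).PairwiseDisjoint s) {k : ℕ} (hk : ∀ i, (s i).card = k) :
    (T.biUnion s).card = k * T.card := by
  rw [Finset.card_biUnion hs, Finset.sum_congr rfl fun i _ => hk i, Finset.sum_const,
    smul_eq_mul, mul_comm]

def triple {ι α : Type*} [DecidableEq α] (t : ι → Fin 3 → α) (i : ι) : Finset α :=
  {t i 0, t i 1, t i 2}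

theorem card_triple {ι α : Type*} [DecidableEq α] {t : ι → Fin 3 → α} {i : ι}
    (ht : Function.Injective (t i)) : (triple t i).card = 3 :=
  Finset.card_eq_three.mpr
    ⟨_, _, _, ht.ne (by decide), ht.ne (by decide), ht.ne (by decide), rfl⟩

section InstanceJ

variable {m n : ℕ}

theorem cX_injective : Function.Injective (cX : Fin (3 * n) → Course m n) :=
  fun _ _ h => by simpa [cX] using h

theorem cY_injective : Function.Injective (cY : Fin m → Course m n) :=
  fun _ _ h => by simpa [cY] using h

theorem cW_injective : Function.Injective (cW : Fin (m - n) → Course m n) :=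
  fun _ _ h => by simpa [cW] using h

def capJ (m n : ℕ) (a : Fin (m + 1)) : ℕ := if (a : ℕ) < m then 4 else 2 * n + m

@[simp] theorem capJ_castSucc (i : Fin m) : capJ m n i.castSucc = 4 := by simp [capJ]

@[simp] theorem capJ_last : capJ m n (Fin.last m) = 2 * n + m := by simp [capJ]

variable (hm : 0 < m) (t : Fin m → Fin 3 → Fin (3 * n))
  (lW : List (Fin (m - n))) (lX : List (Fin (3 * n))) (lW' : List (Fin (m - n)))

theorem prefJ_castSucc (i : Fin m) :
    prefJ hm t lW lX lW' i.castSucc =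
      cT i :: (lW.map cW ++ [cY i, cX (t i 0), cX (t i 1), cX (t i 2)]) := by
  simp [prefJ]

theorem prefJ_last :
    prefJ hm t lW lX lW' (Fin.last m) =
      cY ⟨0, hm⟩ :: (lX.map cX ++ lW'.map cW ++ ((List.finRange m).drop 1).map cY) := by
  simp [prefJ]

theorem cY_mem_prefJ_last (j : Fin m) : cY j ∈ prefJ hm t lW lX lW' (Fin.last m) := by
  rw [prefJ_last]
  by_cases hj : (j : ℕ) = 0
  · simp [show j = ⟨0, hm⟩ from Fin.ext hj]
  · have : j ∈ (List.finRange m).drop 1 :=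
      List.mem_drop_iff_getElem.mpr ⟨j - 1, by simp only [List.length_finRange]; omega,
        by ext; simp only [List.getElem_finRange, Fin.cast_mk]; omega⟩
    exact List.mem_cons_of_mem _ (List.mem_append_right _ (List.mem_map_of_mem this))

variable {t}

theorem prereqJ_castSucc {i : Fin m} {c c' : Course m n} (h : prereqJ t i.castSucc c c') :
    c ∈ insert (cT i) ((triple t i).image cX) ∧ c' ∈ (triple t i).image cX := by
  simp only [prereqJ, Fin.val_castSucc, i.isLt, dif_pos] at h
  rcases h with ⟨rfl, h⟩ | ⟨rfl, h⟩ | ⟨rfl, rfl⟩ <;> aesop (add simp triple)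

theorem prereqJ_castSucc_cT {i : Fin m} {x : Fin (3 * n)} (hx : x ∈ triple t i) :
    prereqJ t i.castSucc (cT i) (cX x) := by
  simp only [prereqJ, Fin.val_castSucc, i.isLt, dif_pos]
  simp only [triple, Finset.mem_insert, Finset.mem_singleton] at hx
  aesop

theorem prereqJ_last {c c' : Course m n} :
    prereqJ t (Fin.last m) c c' ↔ ∃ j k : Fin m, j < k ∧ c = cY j ∧ c' = cY k := by
  simp [prereqJ]

@[simp] theorem bundle_M₀_castSucc (i : Fin m) :
    bundle (M₀ : Finset (Fin (m + 1) × Course m n)) i.castSucc = {cY i} := by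
  ext c; simp [mem_bundle, M₀, eq_comm, Fin.castSucc_ne_last]

@[simp] theorem bundle_M₀_last :
    bundle (M₀ : Finset (Fin (m + 1) × Course m n)) (Fin.last m) =
      Finset.univ.image cX ∪ Finset.univ.image cW := by
  ext c; simp [mem_bundle, M₀, eq_comm, Fin.castSucc_ne_last]

theorem card_bundle_M₀_last (hmn : n ≤ m) :
    (bundle (M₀ : Finset (Fin (m + 1) × Course m n)) (Fin.last m)).card = 2 * n + m := by
  rw [bundle_M₀_last, Finset.card_union_of_disjoint,
    Finset.card_image_of_injective _ cX_injective, Finset.card_image_of_injective _ cW_injective]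
  · simp only [Finset.card_univ, Fintype.card_fin]; omega
  · simp [Finset.disjoint_left, cX, cW]

end InstanceJ

section Forward

variable {m n : ℕ} (hm : 0 < m) {t : Fin m → Fin 3 → Fin (3 * n)}
  {lW : List (Fin (m - n))} (lX : List (Fin (3 * n))) (lW' : List (Fin (m - n)))

def coverBundles (t : Fin m → Fin 3 → Fin (3 * n)) (T' : Finset (Fin m))
    (w : {i // i ∉ T'} → Fin (m - n)) : Fin (m + 1) → Finset (Course m n) :=
  Fin.lastCases (Finset.univ.image cY) fun i =>
    if h : i ∈ T' then insert (cT i) ((triple t i).image cX) else {cW (w ⟨i, h⟩)}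

variable {T' : Finset (Fin m)} {w : {i // i ∉ T'} → Fin (m - n)}

@[simp] theorem coverBundles_last : coverBundles t T' w (Fin.last m) = Finset.univ.image cY :=
  Fin.lastCases_last

theorem coverBundles_castSucc_of_mem {i : Fin m} (hi : i ∈ T') :
    coverBundles t T' w i.castSucc = insert (cT i) ((triple t i).image cX) := by
  simp [coverBundles, hi]

theorem coverBundles_castSucc_of_notMem {i : Fin m} (hi : i ∉ T') :
    coverBundles t T' w i.castSucc = {cW (w ⟨i, hi⟩)} := by
  simp [coverBundles, hi]

theorem pairwise_disjoint_coverBundles (hT' : (T' : Set (Fin m)).PairwiseDisjoint (triple t))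
    (hw : Function.Injective w) :
    Pairwise fun a b => Disjoint (coverBundles t T' w a) (coverBundles t T' w b) := by
  have hlast (i : Fin m) :
      Disjoint (coverBundles t T' w (Fin.last m)) (coverBundles t T' w i.castSucc) := by
    by_cases hi : i ∈ T'
    · simp [coverBundles_castSucc_of_mem hi, Finset.disjoint_left, cY, cT, cX]
    · simp [coverBundles_castSucc_of_notMem hi, cY, cW]
  intro a b hab
  induction a using Fin.lastCases with
  | last =>
    induction b using Fin.lastCases with
    | last => exact absurd rfl hab
    | cast j => exact hlast j
  | cast i =>
    induction b using Fin.lastCases with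
    | last => exact (hlast i).symm
    | cast j =>
      have hij : i ≠ j := fun h => hab (congrArg _ h)
      by_cases hi : i ∈ T' <;> by_cases hj : j ∈ T'
      · simp [coverBundles_castSucc_of_mem, hi, hj, Finset.disjoint_image cX_injective,
          hT' hi hj hij, hij.symm, cT, cX]
      · simp [coverBundles_castSucc_of_mem, coverBundles_castSucc_of_notMem, hi, hj, cT, cX, cW]
      · simp [coverBundles_castSucc_of_mem, coverBundles_castSucc_of_notMem, hi, hj, cT, cX, cW]
      · simp [coverBundles_castSucc_of_notMem, hi, hj, cW_injective.eq_iff, hw.eq_iff, hij]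

theorem isFeasible_coverBundles (hlW : ∀ k, k ∈ lW) (a : Fin (m + 1)) :
    IsFeasible (prefJ hm t lW lX lW') (capJ m n) (prereqJ t) a (coverBundles t T' w a) := by
  induction a using Fin.lastCases with
  | last =>
    refine ⟨?_, ?_, fun c _ c' hc' => ?_⟩
    · simpa using cY_mem_prefJ_last hm t lW lX lW'
    · simp [Finset.card_image_of_injective _ cY_injective]
    · obtain ⟨-, k, -, -, rfl⟩ := prereqJ_last.mp hc'
      simp
  | cast i =>
    by_cases hi : i ∈ T'
    · rw [coverBundles_castSucc_of_mem hi]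
      refine ⟨fun c hc => ?_, ?_,
        fun c _ c' hc' => Finset.mem_insert_of_mem (prereqJ_castSucc hc').2⟩
      · simp only [triple, Finset.mem_insert, Finset.mem_image, Finset.mem_singleton] at hc
        rw [prefJ_castSucc]
        aesop
      · calc _ ≤ ((triple t i).image cX).card + 1 := Finset.card_insert_le _ _
          _ ≤ (triple t i).card + 1 := by gcongr; exact Finset.card_image_le
          _ ≤ 3 + 1 := by gcongr; exact Finset.card_le_three
          _ = capJ m n i.castSucc := by simp
    · rw [coverBundles_castSucc_of_notMem hi]
      refine ⟨fun c hc => ?_, by simp, fun c hc c' hc' => ?_⟩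
      · simp [Finset.mem_singleton.mp hc, prefJ_castSucc, hlW]
      · have := (prereqJ_castSucc hc').1
        simp_all [cT, cX, cW]

theorem lexPrefers_coverBundles (hlW : ∀ k, k ∈ lW) (a : Fin (m + 1)) :
    lexPrefers (prefJ hm t lW lX lW' a) (coverBundles t T' w a) (bundle M₀ a) ∧
      ¬ lexPrefers (prefJ hm t lW lX lW' a) (bundle M₀ a) (coverBundles t T' w a) := by
  induction a using Fin.lastCases with
  | last =>
    rw [prefJ_last, ← List.singleton_append]
    refine lexPrefers_append_and_not (c := cY ⟨0, hm⟩) (by simp [cY, cX, cW]) (by simp)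
      fun d hd => ?_
    simp only [bundle_M₀_last, Finset.mem_sdiff, Finset.mem_union, Finset.mem_image] at hd
    aesop (add simp [cY, cX, cW])
  | cast i =>
    rw [prefJ_castSucc, ← List.cons_append]
    have hY : ∀ d ∈ bundle M₀ i.castSucc \ coverBundles t T' w i.castSucc,
        d ∉ cT i :: lW.map cW := by
      simp [cT, cY, cW]
    by_cases hi : i ∈ T'
    · exact lexPrefers_append_and_not (c := cT i)
        (by simp [coverBundles_castSucc_of_mem hi, cT, cY]) (by simp) hY
    · exact lexPrefers_append_and_not (c := cW (w ⟨i, hi⟩))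
        (by simp [coverBundles_castSucc_of_notMem hi, cY, cW]) (by simp [hlW]) hY

theorem exists_dominating_of_exactCover (htinj : ∀ i, Function.Injective (t i))
    (hlW : ∀ k, k ∈ lW) (hT' : (T' : Set (Fin m)).PairwiseDisjoint (triple t))
    (hcover : T'.biUnion (triple t) = Finset.univ) :
    ∃ M', IsMatching (prefJ hm t lW lX lW') (capJ m n) (fun _ => 1) (prereqJ t) M' ∧
      Dominates (prefJ hm t lW lX lW') M' M₀ := by
  have hcard : T'.card = n := by
    have := card_biUnion_of_card_eq hT' fun i => card_triple (htinj i)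
    rw [hcover, Finset.card_univ, Fintype.card_fin] at this
    omega
  obtain ⟨w⟩ : Nonempty ({i // i ∉ T'} ↪ Fin (m - n)) :=
    Function.Embedding.nonempty_of_card_le (by simp [Fintype.card_subtype_compl, hcard])
  refine ⟨ofBundles (coverBundles t T' w),
    ⟨fun a => ?_, slots_ofBundles_le_one (pairwise_disjoint_coverBundles hT' w.injective)⟩,
    dominates_of_forall_lexPrefers (Fin.last m) fun a => ?_⟩
  · rw [bundle_ofBundles]
    exact isFeasible_coverBundles hm lX lW' hlW a
  · rw [bundle_ofBundles]
    exact lexPrefers_coverBundles hm lX lW' hlW a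

end Forward

section Backward

variable {m n : ℕ} (hm : 0 < m) {t : Fin m → Fin 3 → Fin (3 * n)}
  {lW : List (Fin (m - n))} {lX : List (Fin (3 * n))} {lW' : List (Fin (m - n))}
  {M' : Finset (Fin (m + 1) × Course m n)}

theorem bundle_last_eq_or_forall_cY_mem (hmn : n ≤ m) (hlX : ∀ x, x ∈ lX)
    (hlW' : ∀ k, k ∈ lW')
    (hM : IsMatching (prefJ hm t lW lX lW') (capJ m n) (fun _ => 1) (prereqJ t) M')
    (h : bundle M' (Fin.last m) = bundle M₀ (Fin.last m) ∨
      lexPrefers (prefJ hm t lW lX lW' (Fin.last m)) (bundle M' (Fin.last m))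
        (bundle M₀ (Fin.last m))) :
    bundle M' (Fin.last m) = bundle M₀ (Fin.last m) ∨
      ∀ j, cY j ∈ bundle M' (Fin.last m) := by
  rcases h with h | hpref
  · exact .inl h
  by_cases hsub : bundle M₀ (Fin.last m) ⊆ bundle M' (Fin.last m)
  · -- `a_{m+1}` is already at capacity under `M₀`
    refine .inl (Finset.eq_of_subset_of_card_le hsub ?_).symm
    rw [card_bundle_M₀_last hmn, ← capJ_last]
    exact (hM.1 (Fin.last m)).2.1
  obtain ⟨d, hd, hdB⟩ := Finset.not_subset.mp hsub
  rw [show prefJ hm t lW lX lW' (Fin.last m) = (cY ⟨0, hm⟩ :: (lX.map cX ++ lW'.map cW)) ++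
    ((List.finRange m).drop 1).map cY by simp [prefJ_last]] at hpref
  obtain ⟨c, hc, hcl⟩ := exists_mem_sdiff_mem_of_lexPrefers_append hpref
    (Finset.mem_sdiff.mpr ⟨hd, hdB⟩) (by aesop (add simp [hlX, hlW']))
  have hc0 : c = cY ⟨0, hm⟩ := by
    simp only [bundle_M₀_last, Finset.mem_sdiff, Finset.mem_union, Finset.mem_image] at hc
    aesop
  refine .inr fun j => ?_
  by_cases hj : (j : ℕ) = 0
  · rw [show j = ⟨0, hm⟩ from Fin.ext hj, ← hc0]
    exact (Finset.mem_sdiff.mp hc).1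
  · refine (hM.1 (Fin.last m)).2.2 c (Finset.mem_sdiff.mp hc).1 _
      (prereqJ_last.mpr ⟨⟨0, hm⟩, j, Fin.lt_def.mpr (Nat.pos_of_ne_zero hj), hc0, rfl⟩)

theorem bundle_castSucc_subset_of_bundle_last_eq
    (hM : IsMatching (prefJ hm t lW lX lW') (capJ m n) (fun _ => 1) (prereqJ t) M')
    (h : bundle M' (Fin.last m) = bundle M₀ (Fin.last m)) (i : Fin m) :
    bundle M' i.castSucc ⊆ {cY i} := by
  have hXW :
      ∀ c ∈ bundle M' i.castSucc, c ∉ Finset.univ.image cX ∪ Finset.univ.image cW := by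
    intro c hc
    have := disjoint_bundle hM.2 (Fin.castSucc_ne_last i)
    rw [h, bundle_M₀_last] at this
    exact Finset.disjoint_left.mp this hc
  intro c hc
  have hpref := (hM.1 i.castSucc).1 c hc
  simp only [prefJ_castSucc, List.mem_cons, List.mem_append, List.mem_map,
    List.not_mem_nil, or_false] at hpref
  rcases hpref with rfl | ⟨k, -, rfl⟩ | rfl | rfl | rfl | rfl
  · -- `T_i` would drag `x_{i₁}` along, but `x_{i₁}` stays with `a_{m+1}`
    have := (hM.1 i.castSucc).2.2 _ hc _ (prereqJ_castSucc_cT (x := t i 0) (by simp [triple]))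
    exact absurd (by simp) (hXW _ this)
  · exact absurd (by simp) (hXW _ hc)
  · exact Finset.mem_singleton_self _
  all_goals exact absurd (by simp) (hXW _ hc)

theorem cT_mem_or_exists_cW_mem
    (hM : IsMatching (prefJ hm t lW lX lW') (capJ m n) (fun _ => 1) (prereqJ t) M')
    (hY : ∀ j, cY j ∈ bundle M' (Fin.last m)) (i : Fin m)
    (h : bundle M' i.castSucc = bundle M₀ i.castSucc ∨
      lexPrefers (prefJ hm t lW lX lW' i.castSucc) (bundle M' i.castSucc)
        (bundle M₀ i.castSucc)) :
    cT i ∈ bundle M' i.castSucc ∨ ∃ k, cW k ∈ bundle M' i.castSucc := by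
  have hYi : cY i ∉ bundle M' i.castSucc :=
    Finset.disjoint_right.mp (disjoint_bundle hM.2 (Fin.castSucc_ne_last i)) (hY i)
  rw [bundle_M₀_castSucc] at h
  have hpref := h.resolve_left fun he => hYi (he ▸ Finset.mem_singleton_self _)
  rw [show prefJ hm t lW lX lW' i.castSucc = (cT i :: (lW.map cW ++ [cY i])) ++
    [cX (t i 0), cX (t i 1), cX (t i 2)] by simp [prefJ_castSucc]] at hpref
  obtain ⟨c, hc, hcl⟩ := exists_mem_sdiff_mem_of_lexPrefers_append hpref (d := cY i)
    (by simp [hYi]) (by simp)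
  simp only [Finset.mem_sdiff, Finset.mem_singleton] at hc
  simp only [List.mem_cons, List.mem_append, List.mem_map] at hcl
  aesop

theorem exactCover_of_cT_mem_or_exists_cW_mem (hmn : n ≤ m)
    (htinj : ∀ i, Function.Injective (t i))
    (hM : IsMatching (prefJ hm t lW lX lW') (capJ m n) (fun _ => 1) (prereqJ t) M')
    (h : ∀ i, cT i ∈ bundle M' i.castSucc ∨ ∃ k, cW k ∈ bundle M' i.castSucc) :
    ∃ T' : Finset (Fin m), (T' : Set (Fin m)).PairwiseDisjoint (triple t) ∧
      T'.biUnion (triple t) = Finset.univ := by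
  set S := Finset.univ.filter fun i => cT i ∈ bundle M' i.castSucc
  have hX : ∀ i ∈ S, (triple t i).image cX ⊆ bundle M' i.castSucc := fun i hi c hc => by
    obtain ⟨x, hx, rfl⟩ := Finset.mem_image.mp hc
    exact (hM.1 _).2.2 _ (Finset.mem_filter.mp hi).2 _ (prereqJ_castSucc_cT hx)
  have hdisj : (S : Set (Fin m)).PairwiseDisjoint (triple t) := fun i hi j hj hij =>
    (Finset.disjoint_image cX_injective).mp
      ((disjoint_bundle hM.2 ((Fin.castSucc_injective m).ne hij)).mono (hX i hi) (hX j hj))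
  have hcard := card_biUnion_of_card_eq hdisj fun i => card_triple (htinj i)
  have hupper : 3 * S.card ≤ 3 * n := by
    simpa [hcard] using Finset.card_le_univ (S.biUnion (triple t))
  -- each `a_i` with `i ∉ S` holds its own course of `W`
  have hlower : Sᶜ.card ≤ (Finset.univ : Finset (Fin (m - n))).card := by
    refine Finset.card_le_card_of_forall_subsingleton (fun i k => cW k ∈ bundle M' i.castSucc)
      (fun i hi => ?_) fun k _ i hi j hj => ?_
    · obtain ⟨k, hk⟩ := (h i).resolve_left (by simpa [S] using hi)
      exact ⟨k, Finset.mem_univ _, hk⟩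
    · by_contra hij
      exact Finset.disjoint_left.mp
        (disjoint_bundle hM.2 ((Fin.castSucc_injective m).ne hij)) hi.2 hj.2
  rw [Finset.card_compl, Finset.card_univ, Fintype.card_fin, Fintype.card_fin] at hlower
  refine ⟨S, hdisj, Finset.eq_univ_of_card _ ?_⟩
  have := S.card_le_univ
  rw [Fintype.card_fin] at this ⊢
  omega

theorem exactCover_of_dominates (hmn : n ≤ m) (htinj : ∀ i, Function.Injective (t i))
    (hlX : ∀ x, x ∈ lX) (hlW' : ∀ k, k ∈ lW')
    (hM : IsMatching (prefJ hm t lW lX lW') (capJ m n) (fun _ => 1) (prereqJ t) M')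
    (hdom : Dominates (prefJ hm t lW lX lW') M' M₀) :
    ∃ T' : Finset (Fin m), (T' : Set (Fin m)).PairwiseDisjoint (triple t) ∧
      T'.biUnion (triple t) = Finset.univ := by
  rcases bundle_last_eq_or_forall_cY_mem hm hmn hlX hlW' hM (hdom.eq_or_lexPrefers _)
    with hlast | hY
  · exfalso
    obtain ⟨a, ha⟩ := hdom.1
    induction a using Fin.lastCases with
    | last => exact not_lexPrefers_of_subset _ hlast.subset ha
    | cast i =>
      refine not_lexPrefers_of_subset _ ?_ ha
      simpa using bundle_castSucc_subset_of_bundle_last_eq hm hM hlast i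
  · exact exactCover_of_cT_mem_or_exists_cW_mem hm hmn htinj hM
      fun i => cT_mem_or_exists_cW_mem hm hM hY i (hdom.eq_or_lexPrefers _)

end Backward

theorem exact_cover_iff_M_dominated_general {m n : ℕ} (hm : 0 < m) (hmn : n ≤ m)
    (t : Fin m → Fin 3 → Fin (3 * n)) (htinj : ∀ i, Function.Injective (t i))
    (lW : List (Fin (m - n))) (hlWall : ∀ k, k ∈ lW)
    (lX : List (Fin (3 * n))) (hlXall : ∀ x, x ∈ lX)
    (lW' : List (Fin (m - n))) (hlW'all : ∀ k, k ∈ lW') :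
    (∃ T' : Finset (Fin m),
        ((T' : Set (Fin m)).Pairwise fun i j =>
          Disjoint ({t i 0, t i 1, t i 2} : Finset (Fin (3 * n)))
            {t j 0, t j 1, t j 2}) ∧
        T'.biUnion (fun i => ({t i 0, t i 1, t i 2} : Finset (Fin (3 * n)))) =
          Finset.univ) ↔
      ∃ M' : Finset (Fin (m + 1) × Course m n),
        IsMatching (prefJ hm t lW lX lW')
          (fun a => if (a : ℕ) < m then 4 else 2 * n + m) (fun _ => 1)
          (prereqJ t) M' ∧
        Dominates (prefJ hm t lW lX lW') M' M₀ :=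
  ⟨fun ⟨_, hT', hcover⟩ => exists_dominating_of_exactCover hm lX lW' htinj hlWall hT' hcover,
    fun ⟨_, hM, hdom⟩ => exactCover_of_dominates hm hmn htinj hlXall hlW'all hM hdom⟩

/-- the family `T` (given by `t`, each `T_i` a 3-element subset of
`X = Fin (3n)`, with `m ≥ n ≥ …`) has an exact 3-cover if and only if some matching
of the CAPR instance `J` dominates the matching `M₀`.  Capacities: `q(a_i) = 4`
for `i ≤ m`, `q(a_{m+1}) = 2n + m`, every course has capacity 1. -/
theorem exact_cover_iff_M_dominated {m n : ℕ} (hm : 0 < m) (hmn : n ≤ m)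
    (t : Fin m → Fin 3 → Fin (3 * n)) (htinj : ∀ i, Function.Injective (t i))
    (lW : List (Fin (m - n))) (hlW : lW.Nodup) (hlWall : ∀ k, k ∈ lW)
    (lX : List (Fin (3 * n))) (hlX : lX.Nodup) (hlXall : ∀ x, x ∈ lX)
    (lW' : List (Fin (m - n))) (hlW' : lW'.Nodup) (hlW'all : ∀ k, k ∈ lW') :
    (∃ T' : Finset (Fin m),
        ((T' : Set (Fin m)).Pairwise fun i j =>
          Disjoint ({t i 0, t i 1, t i 2} : Finset (Fin (3 * n)))
            {t j 0, t j 1, t j 2}) ∧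
        T'.biUnion (fun i => ({t i 0, t i 1, t i 2} : Finset (Fin (3 * n)))) =
          Finset.univ) ↔
      ∃ M' : Finset (Fin (m + 1) × Course m n),
        IsMatching (prefJ hm t lW lX lW')
          (fun a => if (a : ℕ) < m then 4 else 2 * n + m) (fun _ => 1)
          (prereqJ t) M' ∧
        Dominates (prefJ hm t lW lX lW') M' M₀ :=
  exact_cover_iff_M_dominated_general hm hmn t htinj lW hlWall lX hlXall lW' hlW'all
end

section
/- Let G = (V, E) be a graph with V = {v_1,…,v_n} and E = {e_1,…,e_m} (m ≥ 1), and let K be a positive integer. Construct the CAAPR instance I with a single applicant a₁ of capacity m + K + 1 and course set V ∪ E ∪ {b}, all courses acceptable to a₁ and each of capacity 1, with preference list P(a₁): b, e_1, e_2, …, e_m, v_1, v_2, …, v_n; the alternative prerequisites of a₁ are: b ↦ {e_1}; e_j ↦ {e_{j+1}} for 1 ≤ j ≤ m−1; and additionally, for each edge e_j = {v_i, v_k}, e_j ↦ {v_i, v_k}. Then G admits a vertex cover of size at most K if and only if a₁ has a feasible bundle containing the course b. -/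
open Finset

/-- The courses of the CAAPR instance: the vertex courses `v_i`, the edge courses
`e_j`, and the course `b`. -/
abbrev CourseVC (n m : ℕ) := (Fin n) ⊕ ((Fin m) ⊕ Unit)

/-- The bundle `S` is feasible for the single applicant `a₁` of capacity
`m + K + 1` with the alternative prerequisites of the statement: all courses are
acceptable; `b ↦ {e_1}`; `e_j ↦ {e_{j+1}}` for `1 ≤ j ≤ m − 1`; and
`e_j ↦ {v_i, v_k}` for each edge `e_j = {v_i, v_k}` (endpoints given by `ep`). -/
def FeasibleVC {n m : ℕ} (hm : 0 < m) (ep : Fin m → Fin n × Fin n) (K : ℕ)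
    (S : Finset (CourseVC n m)) : Prop :=
  S.card ≤ m + K + 1 ∧
    (Sum.inr (Sum.inr ()) ∈ S → Sum.inr (Sum.inl (⟨0, hm⟩ : Fin m)) ∈ S) ∧
    (∀ j : Fin m, ∀ h : (j : ℕ) + 1 < m,
      Sum.inr (Sum.inl j) ∈ S → Sum.inr (Sum.inl (⟨(j : ℕ) + 1, h⟩ : Fin m)) ∈ S) ∧
    ∀ j : Fin m, Sum.inr (Sum.inl j) ∈ S →
      (Sum.inl (ep j).1 ∈ S ∨ Sum.inl (ep j).2 ∈ S)

/-- let `G` be a graph with vertices `Fin n` and edges `e_1, …, e_m`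
(`m ≥ 1`) given by their endpoints `ep` (loopless and pairwise distinct as
unordered pairs), and let `K` be a positive integer.  In the CAAPR instance of
the statement (single applicant `a₁` of capacity `m + K + 1`, all courses
acceptable and of capacity 1), `G` admits a vertex cover of size at most `K` iff
`a₁` has a feasible bundle containing the course `b`. -/
theorem vertex_cover_iff_feasible_bundle_with_b {n m : ℕ} (hm : 0 < m)
    (ep : Fin m → Fin n × Fin n)
    (hloop : ∀ j, (ep j).1 ≠ (ep j).2)
    (hdist : Function.Injective fun j => s((ep j).1, (ep j).2))
    (K : ℕ) (hK : 0 < K) :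
    (∃ S : Finset (Fin n),
        (∀ j : Fin m, (ep j).1 ∈ S ∨ (ep j).2 ∈ S) ∧ S.card ≤ K) ↔
      ∃ B : Finset (CourseVC n m),
        FeasibleVC hm ep K B ∧ Sum.inr (Sum.inr ()) ∈ B := by
  constructor
  · rintro ⟨S, hcov, hcard⟩
    refine ⟨S.image Sum.inl ∪ Finset.univ.image (fun j : Fin m => Sum.inr (Sum.inl j))
      ∪ {Sum.inr (Sum.inr ())}, ⟨?_, ?_, ?_, ?_⟩, ?_⟩
    · calc _ ≤ (S.image (Sum.inl : Fin n → CourseVC n m) ∪ Finset.univ.image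
              (fun j : Fin m => (Sum.inr (Sum.inl j) : CourseVC n m))).card + 1 := by
            simpa using Finset.card_union_le
              (S.image (Sum.inl : Fin n → CourseVC n m) ∪ Finset.univ.image
                (fun j : Fin m => (Sum.inr (Sum.inl j) : CourseVC n m)))
              {(Sum.inr (Sum.inr ()) : CourseVC n m)}
        _ ≤ (S.image (Sum.inl : Fin n → CourseVC n m)).card +
            (Finset.univ.image (fun j : Fin m => (Sum.inr (Sum.inl j) : CourseVC n m))).card
              + 1 := by
            have := Finset.card_union_le (S.image (Sum.inl : Fin n → CourseVC n m))
              (Finset.univ.image (fun j : Fin m => Sum.inr (Sum.inl j)))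
            omega
        _ ≤ K + m + 1 := by
            have h1 : (S.image (Sum.inl : Fin n → CourseVC n m)).card ≤ K :=
              le_trans (Finset.card_image_le) hcard
            have h2 : (Finset.univ.image
                (fun j : Fin m => (Sum.inr (Sum.inl j) : CourseVC n m))).card ≤ m := by
              simpa using (Finset.card_image_le (s := (Finset.univ : Finset (Fin m)))
                (f := fun j => (Sum.inr (Sum.inl j) : CourseVC n m)))
            omega
        _ = m + K + 1 := by omega
    · intro _; simp
    · intro j h _; simp
    · intro j hj
      rcases hcov j with h | h
      · left; simp [h]
      · right; simp [h]
    · simp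
  · rintro ⟨B, ⟨hcard, hb0, hsucc, hcov⟩, hbB⟩
    have he : ∀ k : ℕ, ∀ h : k < m, Sum.inr (Sum.inl (⟨k, h⟩ : Fin m)) ∈ B := by
      intro k
      induction k with
      | zero => intro h; exact hb0 hbB
      | succ k ih =>
        intro h
        have hk : k < m := Nat.lt_of_succ_lt h
        exact hsucc ⟨k, hk⟩ h (ih hk)
    refine ⟨Finset.univ.filter (fun i => Sum.inl i ∈ B), ?_, ?_⟩
    · intro j
      rcases hcov j (by simpa using he j j.isLt) with h | h
      · left; simp [h]
      · right; simp [h]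
    · set S := Finset.univ.filter (fun i => Sum.inl i ∈ B) with hS
      have hsub : S.image Sum.inl ∪ Finset.univ.image
          (fun j : Fin m => Sum.inr (Sum.inl j)) ∪ {Sum.inr (Sum.inr ())} ⊆ B := by
        intro x hx
        simp only [Finset.mem_union, Finset.mem_image, Finset.mem_singleton] at hx
        rcases hx with (⟨i, hi, rfl⟩ | ⟨j, _, rfl⟩) | rfl
        · simpa [hS] using (Finset.mem_filter.mp hi).2
        · simpa using he j j.isLt
        · exact hbB
      have hd1 : Disjoint (S.image (Sum.inl : Fin n → CourseVC n m))
          (Finset.univ.image (fun j : Fin m => (Sum.inr (Sum.inl j) : CourseVC n m))) := by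
        simp [Finset.disjoint_left]
      have hd2 : Disjoint (S.image (Sum.inl : Fin n → CourseVC n m) ∪
          Finset.univ.image (fun j : Fin m => (Sum.inr (Sum.inl j) : CourseVC n m)))
          ({Sum.inr (Sum.inr ())} : Finset (CourseVC n m)) := by
        simp [Finset.disjoint_left]
      have hcards : S.card + m + 1 ≤ B.card := by
        have := Finset.card_le_card hsub
        rw [Finset.card_union_of_disjoint hd2, Finset.card_union_of_disjoint hd1] at this
        have h1 : (S.image (Sum.inl : Fin n → CourseVC n m)).card = S.card :=
          Finset.card_image_of_injective _ Sum.inl_injective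
        have h2 : (Finset.univ.image
            (fun j : Fin m => (Sum.inr (Sum.inl j) : CourseVC n m))).card = m := by
          rw [Finset.card_image_of_injective]
          · simp
          · intro a b hab; simpa using hab
        simp only [h1, h2, Finset.card_singleton] at this
        omega
      omega
end

section
/- Let w_1,…,w_n, p_1,…,p_n, W, P be positive integers. Consider the CACR instance with a single applicant a₁ of capacity W and course set C ∪ D, where C = {c_1,…,c_n} and D = ⋃_{i=1}^n {d_i^1,…,d_i^{w_i−1}}, every course has capacity 1 and is acceptable to a₁, the corequisite equivalence classes are C^i = {c_i, d_i^1, …, d_i^{w_i−1}} for 1 ≤ i ≤ n, and a₁ has additive utilities u(c_i) = p_i + δ_i and u(d_i^j) = ε_i^j, where the δ_i and ε_i^j are arbitrary positive reals whose total sum is less than 1. Then a₁ has a feasible bundle of total utility at least P if and only if there exists a set K ⊆ {1,…,n} with Σ_{i∈K} w_i ≤ W and Σ_{i∈K} p_i ≥ P (i.e., if and only if the knapsack instance (w, p, W, P) is a yes-instance). -/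
open Finset


private lemma sum_bundle {n : ℕ} {w : Fin n → ℕ}
    (S : Finset ((Fin n) ⊕ (Σ i : Fin n, Fin (w i - 1))))
    (hiff : ∀ (i : Fin n) (j : Fin (w i - 1)), Sum.inl i ∈ S ↔ Sum.inr ⟨i, j⟩ ∈ S)
    {M : Type*} [AddCommMonoid M] (f : ((Fin n) ⊕ (Σ i : Fin n, Fin (w i - 1))) → M) :
    ∑ c ∈ S, f c =
      ∑ i ∈ univ.filter (fun i => Sum.inl i ∈ S),
        (f (Sum.inl i) + ∑ j, f (Sum.inr ⟨i, j⟩)) := by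
  classical
  have h1 : ∑ c ∈ S, f c = ∑ c : ((Fin n) ⊕ (Σ i : Fin n, Fin (w i - 1))),
      if c ∈ S then f c else 0 := by
    rw [Finset.sum_ite_mem, univ_inter]
  rw [h1, Fintype.sum_sum_type, Finset.sum_add_distrib]
  congr 1
  · rw [Finset.sum_filter]
  · rw [← Finset.univ_sigma_univ, Finset.sum_sigma, Finset.sum_filter]
    refine Finset.sum_congr rfl fun i _ => ?_
    simp only [← hiff]
    split <;> simp

/-- the knapsack reduction for CACR with additive preferences.
The instance has a single applicant `a₁` of capacity `W`; the courses are
`c_i` (`Sum.inl i`) and `d_i^j` (`Sum.inr ⟨i, j⟩`, `1 ≤ j ≤ w_i − 1`), all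
acceptable to `a₁` and of capacity 1; the corequisite equivalence classes are
`C^i = {c_i, d_i^1, …, d_i^{w_i−1}}`, so a feasible bundle contains `c_i` iff it
contains each `d_i^j`; the utilities are `u (c_i) = p_i + δ_i` and
`u (d_i^j) = ε_i^j`, with all `δ_i, ε_i^j` positive reals of total sum `< 1`.
Then `a₁` has a feasible bundle of total utility at least `P` iff the knapsack
instance `(w, p, W, P)` is a yes-instance. -/
theorem cacr_knapsack_reduction {n : ℕ} (w p : Fin n → ℕ) (W P : ℕ)
    (hw : ∀ i, 0 < w i) (hp : ∀ i, 0 < p i) (hW : 0 < W) (hP : 0 < P)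
    (δ : Fin n → ℝ) (ε : (i : Fin n) → Fin (w i - 1) → ℝ)
    (hδ : ∀ i, 0 < δ i) (hε : ∀ i j, 0 < ε i j)
    (hsum : (∑ i, δ i) + ∑ i, ∑ j, ε i j < 1) :
    (∃ S : Finset ((Fin n) ⊕ (Σ i : Fin n, Fin (w i - 1))),
        -- `S` is a feasible bundle for `a₁` ...
        S.card ≤ W ∧
        (∀ (i : Fin n) (j : Fin (w i - 1)), Sum.inl i ∈ S ↔ Sum.inr ⟨i, j⟩ ∈ S) ∧
        -- ... of total utility at least `P`
        (P : ℝ) ≤ ∑ c ∈ S,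
          Sum.elim (fun i => (p i : ℝ) + δ i) (fun d => ε d.1 d.2) c) ↔
      (∃ K : Finset (Fin n), ∑ i ∈ K, w i ≤ W ∧ P ≤ ∑ i ∈ K, p i) := by
  classical
  constructor
  · rintro ⟨S, hcard, hiff, hutil⟩
    set K := univ.filter (fun i => Sum.inl i ∈ S) with hK
    refine ⟨K, ?_, ?_⟩
    · have hc : S.card = ∑ i ∈ K, w i := by
        rw [Finset.card_eq_sum_ones, sum_bundle S hiff]
        refine Finset.sum_congr rfl fun i _ => ?_
        simp [Nat.add_sub_cancel' (hw i)]
      exact hc ▸ hcard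
    · have hu : ∑ c ∈ S, Sum.elim (fun i => (p i : ℝ) + δ i) (fun d => ε d.1 d.2) c
          = (∑ i ∈ K, (p i : ℝ)) + ((∑ i ∈ K, δ i) + ∑ i ∈ K, ∑ j, ε i j) := by
        rw [sum_bundle S hiff]
        simp only [Sum.elim_inl, Sum.elim_inr]
        rw [← Finset.sum_add_distrib, ← Finset.sum_add_distrib]
        ring_nf
        refine Finset.sum_congr rfl fun i _ => ?_
        ring
      have hextra : (∑ i ∈ K, δ i) + ∑ i ∈ K, ∑ j, ε i j < 1 := by
        refine lt_of_le_of_lt (add_le_add ?_ ?_) hsum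
        · exact Finset.sum_le_sum_of_subset_of_nonneg (Finset.subset_univ K)
            (fun i _ _ => (hδ i).le)
        · exact Finset.sum_le_sum_of_subset_of_nonneg (Finset.subset_univ K)
            (fun i _ _ => Finset.sum_nonneg fun j _ => (hε i j).le)
      have hlt : (P : ℝ) < (∑ i ∈ K, p i : ℕ) + 1 := by
        push_cast
        calc (P : ℝ) ≤ _ := hutil
          _ < (∑ i ∈ K, (p i : ℝ)) + 1 := by rw [hu]; linarith
      exact_mod_cast Nat.lt_add_one_iff.mp (by exact_mod_cast hlt)
  · rintro ⟨K, hwK, hpK⟩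
    set S := univ.filter (fun c : (Fin n) ⊕ (Σ i : Fin n, Fin (w i - 1)) =>
      Sum.elim (fun i => i ∈ K) (fun d => d.1 ∈ K) c) with hS
    have hiff : ∀ (i : Fin n) (j : Fin (w i - 1)),
        Sum.inl i ∈ S ↔ Sum.inr ⟨i, j⟩ ∈ S := by intro i j; simp [hS]
    have hfil : univ.filter (fun i => Sum.inl i ∈ S) = K := by ext i; simp [hS]
    refine ⟨S, ?_, hiff, ?_⟩
    · rw [Finset.card_eq_sum_ones, sum_bundle S hiff, hfil]
      calc ∑ i ∈ K, (1 + ∑ _j : Fin (w i - 1), 1) = ∑ i ∈ K, w i := by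
            refine Finset.sum_congr rfl fun i _ => ?_
            simp [Nat.add_sub_cancel' (hw i)]
        _ ≤ W := hwK
    · rw [sum_bundle S hiff, hfil]
      have h0 : (P : ℝ) ≤ ∑ i ∈ K, (p i : ℝ) := by exact_mod_cast hpK
      refine h0.trans (Finset.sum_le_sum fun i _ => ?_)
      simp only [Sum.elim_inl, Sum.elim_inr]
      have h1 : (0:ℝ) ≤ ∑ j : Fin (w i - 1), ε i j :=
        Finset.sum_nonneg fun j _ => (hε i j).le
      linarith [(hδ i)]
end
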